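/- Let k be a field, let f_1, ..., f_m ∈ k[x_1, ..., x_n] and let g ∈ k[x_1, ..., x_n] be a nonzero polynomial. Let y be a new variable and regard all these polynomials as elements of k[x_1, ..., x_n, y]. Then the transcendence degree over k of the set {f_1, ..., f_m, 1 − y·g} equals the transcendence degree over k of {f_1, ..., f_m} plus one. -/

import Mathlib

/-!
Identify `k[x₁, …, xₙ, y]` with `k[x₁, …, xₙ][y]`. There `1 - y g` has degree one in `y` with
leading coefficient `-g ≠ 0`, so it is transcendental over `k[x₁, …, xₙ]`, a fortiori over the
subalgebra generated by any of the `fᵢ`: adjoining it to an independent subfamily of the `fᵢ`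
keeps it independent. Conversely, an independent subfamily of the new family is an independent
subfamily of the `fᵢ` together with at most the one extra element.
-/

open MvPolynomial

namespace MvPolynomial

variable (R : Type*) [CommRing R] (n : ℕ)

noncomputable def finSuccEquivLast :
    MvPolynomial (Fin (n + 1)) R ≃ₐ[R] Polynomial (MvPolynomial (Fin n) R) :=
  (renameEquiv R _root_.finSuccEquivLast).trans (optionEquivLeft R (Fin n))

variable {R n}

@[simp]
lemma finSuccEquivLast_X_last : finSuccEquivLast R n (X (Fin.last n)) = Polynomial.X := by
  simp [finSuccEquivLast, optionEquivLeft_X_none]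

@[simp]
lemma finSuccEquivLast_rename_castSucc (p : MvPolynomial (Fin n) R) :
    finSuccEquivLast R n (rename Fin.castSucc p) = Polynomial.C p := by
  induction p using MvPolynomial.induction_on with
  | C a => simp [finSuccEquivLast, optionEquivLeft_C]
  | add p q hp hq => simp [hp, hq]
  | mul_X p i hp => simp_all [finSuccEquivLast, optionEquivLeft_X_some]

lemma transcendental_range_rename_castSucc_iff {p : MvPolynomial (Fin (n + 1)) R} :
    Transcendental (rename (R := R) (Fin.castSucc : Fin n → Fin (n + 1))).range p ↔
      Transcendental (MvPolynomial (Fin n) R) (finSuccEquivLast R n p) := by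
  have hinj : Function.Injective (rename (R := R) (Fin.castSucc : Fin n → Fin (n + 1))) :=
    rename_injective _ (Fin.castSucc_injective n)
  refine (transcendental_ringHom_iff_of_comp_eq
    (AlgEquiv.ofInjective _ hinj).symm (finSuccEquivLast R n) (AlgEquiv.injective _) ?_).symm
  ext q : 1
  obtain ⟨_, q, rfl⟩ := q
  change Polynomial.C ((AlgEquiv.ofInjective _ hinj).symm (AlgEquiv.ofInjective _ hinj q)) =
    finSuccEquivLast R n (rename Fin.castSucc q)
  rw [AlgEquiv.symm_apply_apply, finSuccEquivLast_rename_castSucc]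

variable [IsDomain R]

theorem transcendental_one_sub_X_last_mul {g : MvPolynomial (Fin n) R} (hg : g ≠ 0) :
    Transcendental (rename (R := R) (Fin.castSucc : Fin n → Fin (n + 1))).range
      (1 - X (Fin.last n) * rename Fin.castSucc g) := by
  have hlinear : finSuccEquivLast R n (1 - X (Fin.last n) * rename Fin.castSucc g) =
      Polynomial.C (-g) * Polynomial.X + Polynomial.C 1 := by
    simp only [map_sub, map_one, map_mul, finSuccEquivLast_X_last,
      finSuccEquivLast_rename_castSucc, map_neg]
    ring
  have hg' : -g ≠ 0 := neg_ne_zero.2 hg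
  rw [transcendental_range_rename_castSucc_iff, hlinear]
  exact Polynomial.transcendental _ (by rw [Polynomial.natDegree_linear hg']; exact one_ne_zero)
    (by rw [Polynomial.leadingCoeff_linear hg']; exact mem_nonZeroDivisors_of_ne_zero hg')

end MvPolynomial

section

variable {R A : Type*} [CommRing R] [CommRing A] [Algebra R A]

theorem AlgebraicIndepOn.comp_preimage {ι ι' : Type*} {x : ι → A} {s : Set ι} {e : ι' → ι}
    (hx : AlgebraicIndepOn R x s) (he : Function.Injective e) :
    AlgebraicIndepOn R (x ∘ e) (e ⁻¹' s) :=
  hx.comp (s.restrictPreimage e) (s.restrictPreimage_injective he)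

theorem AlgebraicIndepOn.snoc_insert_last {m : ℕ} {x : Fin m → A} {a : A} {s : Set (Fin m)}
    (hx : AlgebraicIndepOn R x s) (ha : Transcendental (Algebra.adjoin R (x '' s)) a) :
    AlgebraicIndepOn R (Fin.snoc x a) (insert (Fin.last m) (Fin.castSucc '' s)) := by
  refine .insert (.image_of_comp s _ _ (by simpa only [Fin.snoc_castSucc] using hx)) ?_
  rwa [Fin.snoc_last, ← Set.image_comp, Fin.snoc_comp_castSucc]

end

theorem Fin.card_le_card_preimage_castSucc_add_one {m : ℕ} (s : Finset (Fin (m + 1))) :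
    s.card ≤ (s.preimage Fin.castSucc (Fin.castSucc_injective m).injOn).card + 1 := by
  calc s.card
      ≤ (insert (Fin.last m) ((s.preimage Fin.castSucc _).map Fin.castSuccEmb)).card := by
        refine Finset.card_le_card fun i hi ↦ ?_
        induction i using Fin.lastCases <;> simp_all
    _ ≤ _ := Finset.card_insert_le _ _
    _ = _ := by rw [Finset.card_map]

/-- **Rabinowitsch trick increases transcendence degree by exactly one.**
For `f 1, ..., f m ∈ k[x_1, ..., x_n]` and a nonzero `g`, viewing everything in
`k[x_1, ..., x_n, y]`, the transcendence degree of `{f 1, ..., f m, 1 - y*g}` over `k` is one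
more than the transcendence degree of `{f 1, ..., f m}`. -/
theorem rabinowitsch_trdeg
    (k : Type*) [Field k] (n m r : ℕ)
    (f : Fin m → MvPolynomial (Fin n) k) (g : MvPolynomial (Fin n) k) (hg : g ≠ 0)
    (htrdeg :
      (∃ s : Finset (Fin m), s.card = r ∧ AlgebraicIndependent k (fun i : s => f i)) ∧
      (∀ s : Finset (Fin m), AlgebraicIndependent k (fun i : s => f i) → s.card ≤ r)) :
    let F : Fin (m + 1) → MvPolynomial (Fin (n + 1)) k :=
      Fin.snoc (fun j : Fin m => rename (Fin.castSucc : Fin n → Fin (n + 1)) (f j))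
        (1 - X (Fin.last n) * rename (Fin.castSucc : Fin n → Fin (n + 1)) g)
    (∃ s : Finset (Fin (m + 1)), s.card = r + 1 ∧
      AlgebraicIndependent k (fun i : s => F i)) ∧
    (∀ s : Finset (Fin (m + 1)),
      AlgebraicIndependent k (fun i : s => F i) → s.card ≤ r + 1) := by
  intro F
  set φ := rename (R := k) (Fin.castSucc : Fin n → Fin (n + 1))
  have hφ : Function.Injective φ := rename_injective _ (Fin.castSucc_injective n)
  obtain ⟨⟨s₀, hcard, hs₀⟩, hmax⟩ := htrdeg
  refine ⟨⟨insert (Fin.last m) (s₀.map Fin.castSuccEmb), ?_, ?_⟩, fun s hs ↦ ?_⟩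
  · rw [Finset.card_insert_of_notMem (by simp), Finset.card_map, hcard]
  · have hsub : (φ ∘ f) '' ↑s₀ ⊆ φ.range := by
      rintro _ ⟨i, -, rfl⟩
      exact ⟨f i, rfl⟩
    have hp := (transcendental_one_sub_X_last_mul hg).of_tower_top_of_subalgebra_le
      (Algebra.adjoin_le hsub)
    show AlgebraicIndepOn k F ↑(insert (Fin.last m) (s₀.map Fin.castSuccEmb))
    rw [Finset.coe_insert, Finset.coe_map, Fin.coe_castSuccEmb]
    exact AlgebraicIndepOn.snoc_insert_last (hs₀.map' hφ) hp
  · have hF : F ∘ Fin.castSucc = φ ∘ f := Fin.snoc_comp_castSucc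
    have hφf : AlgebraicIndepOn k (φ ∘ f) (Fin.castSucc ⁻¹' s) :=
      hF ▸ AlgebraicIndepOn.comp_preimage (s := ↑s) hs (Fin.castSucc_injective m)
    have hf : AlgebraicIndepOn k f ↑(s.preimage Fin.castSucc (Fin.castSucc_injective m).injOn) := by
      rw [Finset.coe_preimage]
      exact AlgebraicIndependent.of_comp φ hφf
    exact (Fin.card_le_card_preimage_castSucc_add_one s).trans
      (Nat.add_le_add_right (hmax _ hf) 1)
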